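/- Let C be a monoid object in Cat (a small strict monoidal category) and let a be an object of C.X that is invertible in the object monoid Ob C, with inverse b. Then there exists a natural automorphism α of the coslice projection functor Under.forget C : Under C ⥤ Mon_ Cat such that for every morphism F : C ⟶ D in Mon_ Cat, the component of α at the object Under.mk F is the automorphism of D whose action on an object d of D.X is F(a) ⊗ d ⊗ F(b), and whose action on an arrow f of D.X is id_{F(a)} ⊗ f ⊗ id_{F(b)}, where ⊗ denotes the multiplication of the monoid object D. -/

import Mathlib

open CategoryTheory MonoidalCategory

universe v u

/-- The object monoid of a monoid object in `Cat` (i.e. of a small strict monoidal category). -/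
def Ob (C : Mon Cat.{v, u}) : Type u := C.X

instance obMonoid (C : Mon Cat.{v, u}) : Monoid (Ob C) where
  mul a b := (MonObj.mul : C.X ⊗ C.X ⟶ C.X).toFunctor.obj (a, b)
  one := (MonObj.one : 𝟙_ Cat ⟶ C.X).toFunctor.obj ⟨⟨⟨⟩⟩⟩
  one_mul a := Functor.congr_obj (congrArg Cat.Hom.toFunctor (MonObj.one_mul C.X)) (⟨⟨⟨⟩⟩⟩, a)
  mul_one a := Functor.congr_obj (congrArg Cat.Hom.toFunctor (MonObj.mul_one C.X)) (a, ⟨⟨⟨⟩⟩⟩)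
  mul_assoc a b c :=
    (Functor.congr_obj (congrArg Cat.Hom.toFunctor (MonObj.mul_assoc C.X)) ((a, b), c)).trans rfl

/-!
For a monoid `D` in `Cat` write `λ p` and `ρ q` for the translation functors `d ↦ p ⊗ d` and
`d ↦ d ⊗ q` of `D.X`. Associativity and unitality of `D` say exactly that
`λ p ⋙ λ q = λ (q p)`, `ρ q ⋙ ρ p = ρ (q p)`, `λ p ⋙ ρ q = ρ q ⋙ λ p` and `λ 1 = ρ 1 = 𝟭`, so for
a unit `g` of the object monoid the conjugation `λ g ⋙ ρ g⁻¹` is an action of the units on `D.X`;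
it is strict monoidal because the `g⁻¹ ⊗ g` in `(g d g⁻¹)(g e g⁻¹)` cancels. A strict monoidal
functor `k` intertwines `λ p` with `λ (k p)`, so conjugating each coslice `C ⟶ D` by the image of
`a` is a natural automorphism of `Under.forget C`.
-/

theorem CategoryTheory.Prod.sectR_comp_prod {A B A' B' : Type*} [Category A] [Category B]
    [Category A'] [Category B'] (Z : A) (F : A ⥤ A') (G : B ⥤ B') :
    Prod.sectR Z B ⋙ F.prod G = G ⋙ Prod.sectR (F.obj Z) B' :=
  Functor.hext (fun _ => rfl) (fun _ _ _ => heq_of_eq (Prod.ext (F.map_id Z) rfl))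

theorem CategoryTheory.Prod.sectL_comp_prod {A B A' B' : Type*} [Category A] [Category B]
    [Category A'] [Category B'] (Z : B) (F : A ⥤ A') (G : B ⥤ B') :
    Prod.sectL A Z ⋙ F.prod G = F ⋙ Prod.sectL A' (G.obj Z) :=
  Functor.hext (fun _ => rfl) (fun _ _ _ => heq_of_eq (Prod.ext rfl (G.map_id Z)))

namespace CatMon

variable (D : Mon Cat.{v, u})

abbrev mulFunctor : ↑D.X × ↑D.X ⥤ ↑D.X := (MonObj.mul : D.X ⊗ D.X ⟶ D.X).toFunctor

abbrev oneFunctor : ↑(𝟙_ Cat.{v, u}) ⥤ ↑D.X := (MonObj.one : 𝟙_ Cat ⟶ D.X).toFunctor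

lemma mulFunctor_assoc :
    (mulFunctor D).prod (𝟭 D.X) ⋙ mulFunctor D =
      prod.associator D.X D.X D.X ⋙ (𝟭 D.X).prod (mulFunctor D) ⋙ mulFunctor D :=
  congrArg Cat.Hom.toFunctor (MonObj.mul_assoc D.X)

lemma oneFunctor_prod_comp_mulFunctor :
    (oneFunctor D).prod (𝟭 D.X) ⋙ mulFunctor D = CategoryTheory.Prod.snd _ _ :=
  congrArg Cat.Hom.toFunctor (MonObj.one_mul D.X)

lemma prod_oneFunctor_comp_mulFunctor :
    (𝟭 D.X).prod (oneFunctor D) ⋙ mulFunctor D = CategoryTheory.Prod.fst _ _ :=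
  congrArg Cat.Hom.toFunctor (MonObj.mul_one D.X)

-- `Ob D` is only semireducibly `D.X`, so the source category of `Prod.sectR`/`Prod.sectL` must be
-- given explicitly whenever their object argument lives in `Ob D`.
def leftMul (p : Ob D) : D.X ⥤ D.X := Prod.sectR (C := D.X) p D.X ⋙ mulFunctor D

def rightMul (q : Ob D) : D.X ⥤ D.X := Prod.sectL D.X (D := D.X) q ⋙ mulFunctor D

lemma mulFunctor_comp_leftMul (p : Ob D) :
    mulFunctor D ⋙ leftMul D p = (leftMul D p).prod (𝟭 D.X) ⋙ mulFunctor D :=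
  (congrArg (Functor.prod (Prod.sectR (C := D.X) p D.X) (𝟭 D.X) ⋙ ·) (mulFunctor_assoc D)).symm

lemma mulFunctor_comp_rightMul (q : Ob D) :
    mulFunctor D ⋙ rightMul D q = (𝟭 D.X).prod (rightMul D q) ⋙ mulFunctor D :=
  congrArg (Prod.sectL (↑D.X × ↑D.X) (D := D.X) q ⋙ ·) (mulFunctor_assoc D)

lemma rightMul_prod_comp_mulFunctor (q : Ob D) :
    (rightMul D q).prod (𝟭 D.X) ⋙ mulFunctor D = (𝟭 D.X).prod (leftMul D q) ⋙ mulFunctor D :=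
  congrArg (Functor.prod (Prod.sectL D.X (D := D.X) q) (𝟭 D.X) ⋙ ·) (mulFunctor_assoc D)

lemma leftMul_comp_rightMul (p q : Ob D) :
    leftMul D p ⋙ rightMul D q = rightMul D q ⋙ leftMul D p :=
  congrArg (Prod.sectR (C := D.X) p D.X ⋙ Prod.sectL _ (D := D.X) q ⋙ ·) (mulFunctor_assoc D)

lemma leftMul_comp_leftMul (p q : Ob D) : leftMul D p ⋙ leftMul D q = leftMul D (q * p) :=
  calc leftMul D p ⋙ leftMul D q
      = Prod.sectR (C := D.X) p D.X ⋙ (leftMul D q).prod (𝟭 D.X) ⋙ mulFunctor D :=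
        congrArg (Prod.sectR (C := D.X) p D.X ⋙ ·) (mulFunctor_comp_leftMul D q)
    _ = leftMul D (q * p) :=
        congrArg (· ⋙ mulFunctor D) (Prod.sectR_comp_prod (A := D.X) p (leftMul D q) (𝟭 D.X))

lemma rightMul_comp_rightMul (p q : Ob D) : rightMul D q ⋙ rightMul D p = rightMul D (q * p) :=
  calc rightMul D q ⋙ rightMul D p
      = Prod.sectL D.X (D := D.X) q ⋙ (𝟭 D.X).prod (rightMul D p) ⋙ mulFunctor D :=
        congrArg (Prod.sectL D.X (D := D.X) q ⋙ ·) (mulFunctor_comp_rightMul D p)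
    _ = rightMul D (q * p) :=
        congrArg (· ⋙ mulFunctor D) (Prod.sectL_comp_prod (B := D.X) q (𝟭 D.X) (rightMul D p))

lemma leftMul_one : leftMul D 1 = 𝟭 D.X :=
  calc leftMul D 1
      = Prod.sectR (C := ↑(𝟙_ Cat.{v, u})) ⟨⟨⟨⟩⟩⟩ D.X ⋙
          (oneFunctor D).prod (𝟭 D.X) ⋙ mulFunctor D :=
        (congrArg (· ⋙ mulFunctor D) (Prod.sectR_comp_prod _ (oneFunctor D) (𝟭 D.X))).symm
    _ = 𝟭 D.X := congrArg (Prod.sectR _ D.X ⋙ ·) (oneFunctor_prod_comp_mulFunctor D)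

lemma rightMul_one : rightMul D 1 = 𝟭 D.X :=
  calc rightMul D 1
      = Prod.sectL D.X (D := ↑(𝟙_ Cat.{v, u})) ⟨⟨⟨⟩⟩⟩ ⋙
          (𝟭 D.X).prod (oneFunctor D) ⋙ mulFunctor D :=
        (congrArg (· ⋙ mulFunctor D) (Prod.sectL_comp_prod _ (𝟭 D.X) (oneFunctor D))).symm
    _ = 𝟭 D.X := congrArg (Prod.sectL D.X _ ⋙ ·) (prod_oneFunctor_comp_mulFunctor D)

lemma mulFunctor_comp_leftMul_comp_rightMul (p q : Ob D) (hqp : q * p = 1) :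
    mulFunctor D ⋙ leftMul D p ⋙ rightMul D q =
      (leftMul D p ⋙ rightMul D q).prod (leftMul D p ⋙ rightMul D q) ⋙ mulFunctor D := by
  symm
  calc (leftMul D p ⋙ rightMul D q).prod (leftMul D p ⋙ rightMul D q) ⋙ mulFunctor D
      = (leftMul D p).prod (leftMul D p ⋙ rightMul D q) ⋙
          (rightMul D q).prod (𝟭 D.X) ⋙ mulFunctor D := rfl
    _ = (leftMul D p).prod (leftMul D p ⋙ rightMul D q ⋙ leftMul D q) ⋙ mulFunctor D := by
        rw [rightMul_prod_comp_mulFunctor]; rfl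
    _ = (leftMul D p).prod (𝟭 D.X) ⋙ (𝟭 D.X).prod (rightMul D q) ⋙ mulFunctor D := by
        rw [← leftMul_comp_rightMul D q q, ← Functor.assoc, leftMul_comp_leftMul, hqp, leftMul_one]
        rfl
    _ = mulFunctor D ⋙ leftMul D p ⋙ rightMul D q := by
        rw [← mulFunctor_comp_rightMul, ← Functor.assoc, ← mulFunctor_comp_leftMul]; rfl

def conj (g : (Ob D)ˣ) : D.X ⥤ D.X := leftMul D g ⋙ rightMul D ↑g⁻¹

lemma conj_one : conj D 1 = 𝟭 D.X := by
  rw [conj, inv_one, Units.val_one, leftMul_one, rightMul_one]; rfl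

lemma conj_comp_conj (g h : (Ob D)ˣ) : conj D g ⋙ conj D h = conj D (h * g) :=
  calc conj D g ⋙ conj D h
      = leftMul D g ⋙ (rightMul D ↑g⁻¹ ⋙ leftMul D h) ⋙ rightMul D ↑h⁻¹ := rfl
    _ = (leftMul D g ⋙ leftMul D h) ⋙ rightMul D ↑g⁻¹ ⋙ rightMul D ↑h⁻¹ := by
        rw [← leftMul_comp_rightMul]; rfl
    _ = conj D (h * g) := by
        rw [leftMul_comp_leftMul, rightMul_comp_rightMul, conj, mul_inv_rev, Units.val_mul,
          Units.val_mul]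

lemma mulFunctor_comp_conj (g : (Ob D)ˣ) :
    mulFunctor D ⋙ conj D g = (conj D g).prod (conj D g) ⋙ mulFunctor D :=
  mulFunctor_comp_leftMul_comp_rightMul D _ _ g.inv_mul

lemma oneFunctor_comp_conj (g : (Ob D)ˣ) : oneFunctor D ⋙ conj D g = oneFunctor D :=
  Cat.fromChosenTerminalEquiv.injective (by change ((g : Ob D) * 1) * ↑g⁻¹ = 1; simp)

def conjHom (g : (Ob D)ˣ) : D ⟶ D where
  hom := (conj D g).toCatHom
  isMonHom_hom :=
    { one_hom := Cat.Hom.ext (oneFunctor_comp_conj D g)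
      mul_hom := Cat.Hom.ext (mulFunctor_comp_conj D g) }

def conjIso (g : (Ob D)ˣ) : D ≅ D where
  hom := conjHom D g
  inv := conjHom D g⁻¹
  hom_inv_id := Mon.Hom.ext <| Cat.Hom.ext <|
    (conj_comp_conj D _ _).trans (by rw [inv_mul_cancel, conj_one]; rfl)
  inv_hom_id := Mon.Hom.ext <| Cat.Hom.ext <|
    (conj_comp_conj D _ _).trans (by rw [mul_inv_cancel, conj_one]; rfl)

variable {D} {E : Mon Cat.{v, u}}

lemma mulFunctor_comp_hom (k : D ⟶ E) :
    mulFunctor D ⋙ k.hom.toFunctor = k.hom.toFunctor.prod k.hom.toFunctor ⋙ mulFunctor E :=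
  congrArg Cat.Hom.toFunctor (IsMonHom.mul_hom k.hom)

def _root_.Ob.map (k : D ⟶ E) : Ob D →* Ob E where
  toFun := k.hom.toFunctor.obj
  map_one' := Functor.congr_obj (congrArg Cat.Hom.toFunctor (IsMonHom.one_hom k.hom)) ⟨⟨⟨⟩⟩⟩
  map_mul' x y := Functor.congr_obj (mulFunctor_comp_hom k) (x, y)

lemma leftMul_comp_hom (k : D ⟶ E) (p : Ob D) :
    leftMul D p ⋙ k.hom.toFunctor = k.hom.toFunctor ⋙ leftMul E (Ob.map k p) :=
  calc leftMul D p ⋙ k.hom.toFunctor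
      = Prod.sectR (C := D.X) p D.X ⋙ k.hom.toFunctor.prod k.hom.toFunctor ⋙ mulFunctor E :=
        congrArg (Prod.sectR (C := D.X) p D.X ⋙ ·) (mulFunctor_comp_hom k)
    _ = k.hom.toFunctor ⋙ leftMul E (Ob.map k p) :=
        congrArg (· ⋙ mulFunctor E) (Prod.sectR_comp_prod (A := D.X) p _ _)

lemma rightMul_comp_hom (k : D ⟶ E) (q : Ob D) :
    rightMul D q ⋙ k.hom.toFunctor = k.hom.toFunctor ⋙ rightMul E (Ob.map k q) :=
  calc rightMul D q ⋙ k.hom.toFunctor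
      = Prod.sectL D.X (D := D.X) q ⋙ k.hom.toFunctor.prod k.hom.toFunctor ⋙ mulFunctor E :=
        congrArg (Prod.sectL D.X (D := D.X) q ⋙ ·) (mulFunctor_comp_hom k)
    _ = k.hom.toFunctor ⋙ rightMul E (Ob.map k q) :=
        congrArg (· ⋙ mulFunctor E) (Prod.sectL_comp_prod (B := D.X) q _ _)

lemma conj_comp_hom (k : D ⟶ E) (g : (Ob D)ˣ) :
    conj D g ⋙ k.hom.toFunctor = k.hom.toFunctor ⋙ conj E (Units.map (Ob.map k) g) := by
  rw [conj, Functor.assoc, rightMul_comp_hom, ← Functor.assoc, leftMul_comp_hom, Functor.assoc]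
  rfl

lemma conjHom_comp (k : D ⟶ E) (g : (Ob D)ˣ) :
    conjHom D g ≫ k = k ≫ conjHom E (Units.map (Ob.map k) g) :=
  Mon.Hom.ext (Cat.Hom.ext (conj_comp_hom k g))

def conjIsotropy (C : Mon Cat.{v, u}) (g : (Ob C)ˣ) : Aut (Under.forget C) :=
  NatIso.ofComponents (fun X => conjIso X.right (Units.map (Ob.map X.hom) g)) fun {X Y} w => by
    change w.right ≫ conjHom Y.right _ = conjHom X.right _ ≫ w.right
    rw [conjHom_comp, ← Under.w w]
    rfl

end CatMon

/-- If `a` is an object of a small strict monoidal category `C` (a monoid object in `Cat`)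
which is invertible in the object monoid of `C` with inverse `b`, then there is an element `α`
of the covariant isotropy group of `C` whose component at any strict monoidal functor
`F : C ⟶ D` is the automorphism of `D` given on objects by `d ↦ F a ⊗ d ⊗ F b` and on arrows
by `f ↦ 𝟙 (F a) ⊗ f ⊗ 𝟙 (F b)`. -/
theorem exists_isotropy_elem_of_invertible_object (C : Mon Cat.{v, u}) (a b : Ob C)
    (hab : a * b = 1) (hba : b * a = 1) :
    ∃ α : Aut (Under.forget C), ∀ (D : Mon Cat.{v, u}) (F : C ⟶ D),
      (∀ d : (D.X : Type u),
        (α.hom.app (Under.mk F)).hom.toFunctor.obj d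
          = (MonObj.mul : D.X ⊗ D.X ⟶ D.X).toFunctor.obj
            ((MonObj.mul : D.X ⊗ D.X ⟶ D.X).toFunctor.obj (F.hom.toFunctor.obj a, d),
              F.hom.toFunctor.obj b)) ∧
      (∀ (d d' : (D.X : Type u)) (f : d ⟶ d'),
        HEq ((α.hom.app (Under.mk F)).hom.toFunctor.map f)
          ((MonObj.mul : D.X ⊗ D.X ⟶ D.X).toFunctor.map
            (((MonObj.mul : D.X ⊗ D.X ⟶ D.X).toFunctor.map ((𝟙 (F.hom.toFunctor.obj a), f) :
                (((F.hom.toFunctor.obj a, d) : ↑(D.X ⊗ D.X)) ⟶ ((F.hom.toFunctor.obj a, d') : ↑(D.X ⊗ D.X)))),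
              𝟙 (F.hom.toFunctor.obj b)) :
              ((((MonObj.mul : D.X ⊗ D.X ⟶ D.X).toFunctor.obj (F.hom.toFunctor.obj a, d), F.hom.toFunctor.obj b) : ↑(D.X ⊗ D.X)) ⟶
                (((MonObj.mul : D.X ⊗ D.X ⟶ D.X).toFunctor.obj (F.hom.toFunctor.obj a, d'), F.hom.toFunctor.obj b) : ↑(D.X ⊗ D.X)))))) :=
  ⟨CatMon.conjIsotropy C ⟨a, b, hab, hba⟩, fun _ _ => ⟨fun _ => rfl, fun _ _ _ => HEq.rfl⟩⟩
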